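/- In a dagger kernel category, kernels are closed under composition: the composite of two kernels is again a kernel (and dually, cokernels compose). -/

import Mathlib

open CategoryTheory Limits

universe v u

class Dagger (C : Type u) [Category.{v} C] [HasZeroMorphisms C] where
  dag : ∀ {X Y : C}, (X ⟶ Y) → (Y ⟶ X)
  dag_dag : ∀ {X Y : C} (f : X ⟶ Y), dag (dag f) = f
  dag_comp : ∀ {X Y Z : C} (f : X ⟶ Y) (g : Y ⟶ Z), dag (f ≫ g) = dag g ≫ dag f
  dag_id : ∀ (X : C), dag (𝟙 X) = 𝟙 X
  dag_zero : ∀ (X Y : C), dag (0 : X ⟶ Y) = 0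

namespace Dagger

variable {C : Type u} [Category.{v} C] [HasZeroMorphisms C] [Dagger C]

/-- `f` is a dagger mono: `f† ∘ f = id`. -/
def DaggerMono {X Y : C} (f : X ⟶ Y) : Prop := f ≫ dag f = 𝟙 X

/-- `f` is a dagger epi: `f ∘ f† = id`. -/
def DaggerEpi {X Y : C} (f : X ⟶ Y) : Prop := dag f ≫ f = 𝟙 Y

/-- `k` is a kernel of `f`. -/
structure IsKer {K X Y : C} (f : X ⟶ Y) (k : K ⟶ X) : Prop where
  comp_zero : k ≫ f = 0
  lift : ∀ {Z : C} (g : Z ⟶ X), g ≫ f = 0 → ∃! h : Z ⟶ K, h ≫ k = g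

/-- `k` is a kernel of `f` which is moreover a dagger mono. -/
def IsDagKer {K X Y : C} (f : X ⟶ Y) (k : K ⟶ X) : Prop :=
  IsKer f k ∧ DaggerMono k

/-- `k` is a (dagger-monic) kernel of some map. -/
def KernelMap {K X : C} (k : K ⟶ X) : Prop :=
  ∃ (Y : C) (f : X ⟶ Y), IsDagKer f k

/-- order of subobjects, by factorisation -/
def SubLE {M N X : C} (m : M ⟶ X) (n : N ⟶ X) : Prop :=
  ∃ φ : M ⟶ N, φ ≫ n = m

/-- equality of subobjects -/
def SubEq {M N X : C} (m : M ⟶ X) (n : N ⟶ X) : Prop :=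
  SubLE m n ∧ SubLE n m

/-- `p` represents the orthocomplement `m^⊥ = ker(m†)` of `m`. -/
def IsOrthoOf {M P X : C} (m : M ⟶ X) (p : P ⟶ X) : Prop :=
  IsDagKer (dag m) p

/-- `w` is the meet (intersection) of the kernels `m` and `n` in `KSub(X)`. -/
def IsMeet {M N W X : C} (m : M ⟶ X) (n : N ⟶ X) (w : W ⟶ X) : Prop :=
  KernelMap w ∧ SubLE w m ∧ SubLE w n ∧
    ∀ {K : C} (k : K ⟶ X), KernelMap k → SubLE k m → SubLE k n → SubLE k w

/-- `j` is the join `m ∨ n = (m^⊥ ∧ n^⊥)^⊥` in `KSub(X)`. -/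
def IsJoin {M N J X : C} (m : M ⟶ X) (n : N ⟶ X) (j : J ⟶ X) : Prop :=
  ∃ (MP NP W : C) (mp : MP ⟶ X) (np : NP ⟶ X) (w : W ⟶ X),
    IsOrthoOf m mp ∧ IsOrthoOf n np ∧ IsMeet mp np w ∧ IsOrthoOf w j

/-- `p` represents the pullback `f⁻¹(n) = ker(coker(n) ∘ f)` of the kernel `n` along `f`. -/
def IsInvImg {N P X Y : C} (f : X ⟶ Y) (n : N ⟶ Y) (p : P ⟶ X) : Prop :=
  ∃ (NP : C) (np : NP ⟶ Y), IsOrthoOf n np ∧ IsDagKer (f ≫ dag np) p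

/-- `i` represents the image `ker(coker(f)) = ker(ker(f†)†)` of `f`. -/
def IsImg {I X Y : C} (f : X ⟶ Y) (i : I ⟶ Y) : Prop :=
  ∃ (K : C) (k : K ⟶ Y), IsDagKer (dag f) k ∧ IsDagKer (dag k) i

/-- zero-mono: `m ∘ f = 0` implies `f = 0`. -/
def ZeroMono {X Y : C} (m : X ⟶ Y) : Prop :=
  ∀ {Z : C} (f : Z ⟶ X), f ≫ m = 0 → f = 0

/-- zero-epi: `f ∘ e = 0` implies `f = 0`. -/
def ZeroEpi {X Y : C} (e : X ⟶ Y) : Prop :=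
  ∀ {Z : C} (f : Y ⟶ Z), e ≫ f = 0 → f = 0

end Dagger

/-- A dagger kernel category: a dagger category with a zero object in which
every morphism has a kernel that is a dagger mono. -/
class DagKerCat (C : Type u) [Category.{v} C] [HasZeroMorphisms C]
    [HasZeroObject C] extends Dagger C where
  hasKer : ∀ {X Y : C} (f : X ⟶ Y), ∃ (K : C) (k : K ⟶ X), Dagger.IsDagKer f k

/-! Write `n^⊥⊥` for the maps `h` with `h ≫ g† = 0` whenever `g ≫ n† = 0`. A dagger kernel `m = ker f`
contains its `m^⊥⊥`: taking `g = f†` gives `h ≫ f = 0`. Conversely a dagger mono `n` containing its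
`n^⊥⊥` is the kernel of `(ker n†)†`. For `n = k ≫ m`, a map in `n^⊥⊥` lies in `m^⊥⊥`, so it factors
as `h₁ ≫ m`, and then `h₁` lies in `k^⊥⊥` because `m` is a dagger mono; hence it factors through `n`. -/

namespace Dagger

variable {C : Type u} [Category.{v} C] [HasZeroMorphisms C] [Dagger C]

lemma comp_dag_eq_zero_comm {X Y Z : C} {f : X ⟶ Y} {g : Z ⟶ Y} :
    f ≫ dag g = 0 ↔ g ≫ dag f = 0 := by
  constructor <;> intro h
  · rw [← dag_dag (g ≫ dag f), dag_comp, dag_dag, h, dag_zero]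
  · rw [← dag_dag (f ≫ dag g), dag_comp, dag_dag, h, dag_zero]

lemma DaggerMono.comp {X Y Z : C} {f : X ⟶ Y} {g : Y ⟶ Z} (hf : DaggerMono f)
    (hg : DaggerMono g) : DaggerMono (f ≫ g) := by
  unfold DaggerMono at *
  rw [dag_comp, Category.assoc, reassoc_of% hg, hf]

lemma DaggerMono.eq_comp_dag {X Y Z : C} {m : X ⟶ Y} (hm : DaggerMono m) {h : Z ⟶ X} :
    h = h ≫ m ≫ dag m := by
  rw [hm, Category.comp_id]

lemma DaggerMono.cancel_right {X Y Z : C} {m : X ⟶ Y} (hm : DaggerMono m) {a b : Z ⟶ X}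
    (hab : a ≫ m = b ≫ m) : a = b := by
  rw [hm.eq_comp_dag (h := a), hm.eq_comp_dag (h := b), reassoc_of% hab]

def InDoublePerp {N X Z : C} (n : N ⟶ X) (h : Z ⟶ X) : Prop :=
  ∀ {W : C} (g : W ⟶ X), g ≫ dag n = 0 → h ≫ dag g = 0

lemma InDoublePerp.of_comp {K M X Z : C} {k : K ⟶ M} {m : M ⟶ X} {h : Z ⟶ X}
    (hh : InDoublePerp (k ≫ m) h) : InDoublePerp m h := fun g hg =>
  hh g (by rw [dag_comp, reassoc_of% hg, zero_comp])

lemma InDoublePerp.of_comp_comp {K M X Z : C} {k : K ⟶ M} {m : M ⟶ X} (hm : DaggerMono m)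
    {h : Z ⟶ M} (hh : InDoublePerp (k ≫ m) (h ≫ m)) : InDoublePerp k h := by
  intro W g hg
  have hgm : (g ≫ m) ≫ dag (k ≫ m) = 0 := by
    rw [dag_comp, Category.assoc, reassoc_of% hm, hg]
  have := hh (g ≫ m) hgm
  rwa [dag_comp, Category.assoc, ← Category.assoc m, hm, Category.id_comp] at this

lemma KernelMap.daggerMono {M X : C} {m : M ⟶ X} (hm : KernelMap m) : DaggerMono m :=
  hm.choose_spec.choose_spec.2

lemma KernelMap.subLE_of_inDoublePerp {M X Z : C} {m : M ⟶ X} (hm : KernelMap m) {h : Z ⟶ X}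
    (hh : InDoublePerp m h) : SubLE h m := by
  obtain ⟨Y, f, hker, -⟩ := hm
  have hf : dag f ≫ dag m = 0 := comp_dag_eq_zero_comm.mp (by rw [dag_dag, hker.comp_zero])
  obtain ⟨φ, hφ, -⟩ := hker.lift h (by simpa only [dag_dag] using hh (dag f) hf)
  exact ⟨φ, hφ⟩

lemma DaggerMono.isDagKer_dag_of_forall_subLE {N L X : C} {n : N ⟶ X} (hn : DaggerMono n)
    {l : L ⟶ X} (hl : IsDagKer (dag n) l)
    (hfac : ∀ {Z : C} (h : Z ⟶ X), InDoublePerp n h → SubLE h n) : IsDagKer (dag l) n := by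
  refine ⟨⟨comp_dag_eq_zero_comm.mp hl.1.comp_zero, fun h hh => ?_⟩, hn⟩
  have hperp : InDoublePerp n h := by
    intro W g hg
    obtain ⟨α, rfl, -⟩ := hl.1.lift g hg
    rw [dag_comp, reassoc_of% hh, zero_comp]
  obtain ⟨φ, hφ⟩ := hfac h hperp
  exact ⟨φ, hφ, fun ψ hψ => hn.cancel_right (hψ.trans hφ.symm)⟩

end Dagger

namespace DagKerCat

open Dagger

variable {C : Type u} [Category.{v} C] [HasZeroMorphisms C] [HasZeroObject C] [DagKerCat C]

lemma kernelMap_of_forall_subLE {N X : C} {n : N ⟶ X} (hn : DaggerMono n)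
    (hfac : ∀ {Z : C} (h : Z ⟶ X), InDoublePerp n h → SubLE h n) : KernelMap n := by
  obtain ⟨L, l, hl⟩ := hasKer (dag n)
  exact ⟨L, dag l, hn.isDagKer_dag_of_forall_subLE hl hfac⟩

lemma kernelMap_comp {K M X : C} {k : K ⟶ M} {m : M ⟶ X} (hk : KernelMap k)
    (hm : KernelMap m) : KernelMap (k ≫ m) := by
  refine kernelMap_of_forall_subLE (hk.daggerMono.comp hm.daggerMono) fun h hh => ?_
  obtain ⟨h₁, rfl⟩ := hm.subLE_of_inDoublePerp hh.of_comp
  obtain ⟨h₂, rfl⟩ := hk.subLE_of_inDoublePerp (hh.of_comp_comp hm.daggerMono)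
  exact ⟨h₂, (Category.assoc _ _ _).symm⟩

end DagKerCat

open Dagger in
/-- kernels are closed under composition, and dually cokernels
(daggers of kernels) are closed under composition. -/
theorem stmt4 {C : Type u} [Category.{v} C] [HasZeroMorphisms C] [HasZeroObject C]
    [DagKerCat C] :
    (∀ {K M X : C} (k : K ⟶ M) (m : M ⟶ X),
        KernelMap k → KernelMap m → KernelMap (k ≫ m)) ∧
    (∀ {X M K : C} (c : X ⟶ M) (d : M ⟶ K),
        KernelMap (Dagger.dag c) → KernelMap (Dagger.dag d) →
        KernelMap (Dagger.dag (c ≫ d))) := by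
  refine ⟨fun k m hk hm => DagKerCat.kernelMap_comp hk hm, fun c d hc hd => ?_⟩
  rw [dag_comp]
  exact DagKerCat.kernelMap_comp hd hc
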